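/- arXiv:math/9912047 — 3 statements merged into one kernel-verified Lean document; each statement's English description precedes it below -/
import Mathlib

section
/- If G is a graph with α(G) > |V(G)|/2 and the number of isolated vertices of G is not equal to 1, then |core(G)| ≥ 2. -/
open Finset

variable {V : Type*} [Fintype V] [DecidableEq V]

/-  A set of vertices is stable (independent) if no two of its vertices are adjacent. -/
def stable (G : SimpleGraph V) (S : Finset V) : Prop :=
  ∀ a ∈ S, ∀ b ∈ S, ¬ G.Adj a b

/-  The (open) neighborhood of a set of vertices. -/
open Classical in
noncomputable def nbhd (G : SimpleGraph V) (A : Finset V) : Finset V :=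
  Finset.univ.filter fun v => ∃ a ∈ A, G.Adj a v

/-  The stability number: maximum size of a stable set. -/
open Classical in
noncomputable def alpha (G : SimpleGraph V) : ℕ :=
  Finset.univ.sup fun S : Finset V => if stable G S then S.card else 0

/-  A maximum stable set. -/
def maxStable (G : SimpleGraph V) (S : Finset V) : Prop :=
  stable G S ∧ S.card = alpha G

/-  core(G): the intersection of all maximum stable sets. -/
open Classical in
noncomputable def core (G : SimpleGraph V) : Finset V :=
  Finset.univ.filter fun v => ∀ S : Finset V, maxStable G S → v ∈ S

/-  A vertex is isolated if it has no neighbors. -/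
def isolated (G : SimpleGraph V) (v : V) : Prop := ∀ w, ¬ G.Adj v w

/-  The set of isolated vertices. -/
open Classical in
noncomputable def isol (G : SimpleGraph V) : Finset V :=
  Finset.univ.filter fun v => isolated G v

/- ===================== auxiliary development ===================== -/

/-- The difference function `|X| - |N(X)|` (as an integer). -/
noncomputable def dval (G : SimpleGraph V) (X : Finset V) : ℤ :=
  (X.card : ℤ) - ((nbhd G X).card : ℤ)

/-- The critical difference of a graph: max of `dval` over all vertex subsets. -/
noncomputable def dmax (G : SimpleGraph V) : ℤ :=
  (Finset.univ : Finset (Finset V)).sup' ⟨∅, mem_univ _⟩ (dval G)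

lemma mem_nbhd {G : SimpleGraph V} {X : Finset V} {v : V} :
    v ∈ nbhd G X ↔ ∃ a ∈ X, G.Adj a v := by
  simp [nbhd]

lemma nbhd_mono {G : SimpleGraph V} {X Y : Finset V} (h : X ⊆ Y) :
    nbhd G X ⊆ nbhd G Y := by
  intro v hv
  rw [mem_nbhd] at *
  obtain ⟨a, ha, hadj⟩ := hv
  exact ⟨a, h ha, hadj⟩

lemma nbhd_union {G : SimpleGraph V} (X Y : Finset V) :
    nbhd G (X ∪ Y) = nbhd G X ∪ nbhd G Y := by
  ext v
  simp only [mem_nbhd, mem_union]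
  constructor
  · rintro ⟨a, ha | ha, hadj⟩
    · exact Or.inl ⟨a, ha, hadj⟩
    · exact Or.inr ⟨a, ha, hadj⟩
  · rintro (⟨a, ha, hadj⟩ | ⟨a, ha, hadj⟩)
    · exact ⟨a, Or.inl ha, hadj⟩
    · exact ⟨a, Or.inr ha, hadj⟩

lemma dval_le_dmax (G : SimpleGraph V) (X : Finset V) : dval G X ≤ dmax G :=
  Finset.le_sup' (dval G) (mem_univ X)

lemma card_le_alpha {G : SimpleGraph V} {S : Finset V} (h : stable G S) :
    S.card ≤ alpha G := by
  classical
  rw [alpha]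
  have h2 : S.card = if stable G S then S.card else 0 := by rw [if_pos h]
  rw [h2]
  exact Finset.le_sup (f := fun S : Finset V => if stable G S then S.card else 0) (mem_univ S)

lemma exists_maxStable (G : SimpleGraph V) : ∃ S, maxStable G S := by
  classical
  obtain ⟨S, -, hS⟩ := Finset.exists_mem_eq_sup (Finset.univ : Finset (Finset V))
    ⟨∅, mem_univ _⟩ (fun S : Finset V => if stable G S then S.card else 0)
  by_cases hst : stable G S
  · exact ⟨S, hst, by rw [alpha, hS, if_pos hst]⟩
  · refine ⟨∅, by intro a ha; simp at ha, ?_⟩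
    have : alpha G = 0 := by rw [alpha, hS, if_neg hst]
    simp [this]

/-- Submodularity of dval. -/
lemma dval_submod (G : SimpleGraph V) (X Y : Finset V) :
    dval G X + dval G Y ≤ dval G (X ∩ Y) + dval G (X ∪ Y) := by
  have hcard : (X ∩ Y).card + (X ∪ Y).card = X.card + Y.card := by
    rw [add_comm]
    exact Finset.card_union_add_card_inter X Y
  have hsub : nbhd G (X ∩ Y) ⊆ nbhd G X ∩ nbhd G Y :=
    subset_inter (nbhd_mono inter_subset_left) (nbhd_mono inter_subset_right)
  have h1 : (nbhd G (X ∩ Y)).card ≤ (nbhd G X ∩ nbhd G Y).card :=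
    card_le_card hsub
  have h2 : (nbhd G X ∩ nbhd G Y).card + (nbhd G X ∪ nbhd G Y).card
      = (nbhd G X).card + (nbhd G Y).card := by
    rw [add_comm]; exact Finset.card_union_add_card_inter _ _
  have h3 : nbhd G (X ∪ Y) = nbhd G X ∪ nbhd G Y := nbhd_union X Y
  simp only [dval]
  rw [h3]
  have := hcard
  push_cast at hcard h1 h2
  linarith

/-- Existence of the minimum critical set. -/
lemma exists_min_critical (G : SimpleGraph V) :
    ∃ K : Finset V, dval G K = dmax G ∧ ∀ X, dval G X = dmax G → K ⊆ X := by
  classical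
  obtain ⟨K₀, -, hK₀⟩ := Finset.exists_mem_eq_sup' (s := (Finset.univ : Finset (Finset V)))
    ⟨∅, mem_univ _⟩ (dval G)
  have hne : ((Finset.univ : Finset (Finset V)).filter fun X => dval G X = dmax G).Nonempty :=
    ⟨K₀, Finset.mem_filter.2 ⟨mem_univ _, hK₀.symm⟩⟩
  obtain ⟨K, hKmem, hKmin⟩ := Finset.exists_min_image _ Finset.card hne
  rw [mem_filter] at hKmem
  refine ⟨K, hKmem.2, ?_⟩
  intro X hX
  have hsub := dval_submod G K X
  have hm1 : dval G (K ∩ X) ≤ dmax G := dval_le_dmax G _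
  have hm2 : dval G (K ∪ X) ≤ dmax G := dval_le_dmax G _
  have hKX : dval G (K ∩ X) = dmax G := by
    rw [hKmem.2, hX] at hsub; linarith
  have hle : K.card ≤ (K ∩ X).card :=
    hKmin (K ∩ X) (by simp [hKX])
  have hKeq : K ∩ X = K :=
    Finset.eq_of_subset_of_card_le inter_subset_left hle
  intro v hv
  rw [← hKeq] at hv
  exact (mem_inter.1 hv).2


/-- The minimum critical set avoids its own neighborhood. -/
lemma min_critical_inter (G : SimpleGraph V) {K : Finset V} (hK : dval G K = dmax G)
    (hmin : ∀ X, dval G X = dmax G → K ⊆ X) : K ∩ nbhd G K = ∅ := by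
  classical
  have hsub : nbhd G (K \ nbhd G K) ⊆ nbhd G K \ K := by
    intro v hv
    rw [mem_nbhd] at hv
    obtain ⟨a, ha, hadj⟩ := hv
    rw [mem_sdiff] at ha
    refine mem_sdiff.2 ⟨mem_nbhd.2 ⟨a, ha.1, hadj⟩, fun hvK => ?_⟩
    exact ha.2 (mem_nbhd.2 ⟨v, hvK, hadj.symm⟩)
  have c1 : (K \ nbhd G K).card + (K ∩ nbhd G K).card = K.card :=
    card_sdiff_add_card_inter K (nbhd G K)
  have c2 : (nbhd G K \ K).card + (nbhd G K ∩ K).card = (nbhd G K).card :=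
    card_sdiff_add_card_inter (nbhd G K) K
  have c3 : (nbhd G (K \ nbhd G K)).card ≤ (nbhd G K \ K).card := card_le_card hsub
  have c4 : (nbhd G K ∩ K).card = (K ∩ nbhd G K).card := by rw [inter_comm]
  have hge : dval G K ≤ dval G (K \ nbhd G K) := by
    rw [dval, dval]
    push_cast at c1 c2 c3 c4 ⊢
    omega
  have heq : dval G (K \ nbhd G K) = dmax G :=
    le_antisymm (dval_le_dmax G _) (hK ▸ hge)
  have hKsub : K ⊆ K \ nbhd G K := hmin _ heq
  ext v
  simp only [mem_inter, notMem_empty, iff_false]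
  rintro ⟨hvK, hvN⟩
  exact (mem_sdiff.1 (hKsub hvK)).2 hvN

lemma min_critical_stable (G : SimpleGraph V) {K : Finset V}
    (hKN : K ∩ nbhd G K = ∅) : stable G K := by
  intro a ha b hb hadj
  have hmem : b ∈ K ∩ nbhd G K := mem_inter.2 ⟨hb, mem_nbhd.2 ⟨a, ha, hadj⟩⟩
  rw [hKN] at hmem
  exact notMem_empty b hmem

/-- The minimum critical set is contained in every maximum stable set. -/
lemma min_critical_subset (G : SimpleGraph V) {K : Finset V} (hK : dval G K = dmax G)
    (hmin : ∀ X, dval G X = dmax G → K ⊆ X) {S : Finset V} (hS : maxStable G S) :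
    K ⊆ S := by
  classical
  have hKN : K ∩ nbhd G K = ∅ := min_critical_inter G hK hmin
  have hKst : stable G K := min_critical_stable G hKN
  obtain ⟨hSst, hScard⟩ := hS
  have hS'st : stable G ((S \ nbhd G K) ∪ K) := by
    intro a ha b hb hadj
    rcases mem_union.1 ha with ha | ha
    · rcases mem_union.1 hb with hb | hb
      · exact hSst a (mem_sdiff.1 ha).1 b (mem_sdiff.1 hb).1 hadj
      · exact (mem_sdiff.1 ha).2 (mem_nbhd.2 ⟨b, hb, hadj.symm⟩)
    · rcases mem_union.1 hb with hb | hb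
      · exact (mem_sdiff.1 hb).2 (mem_nbhd.2 ⟨a, ha, hadj⟩)
      · exact hKst a ha b hb hadj
  have e1 : (S \ nbhd G K) ∩ K = K ∩ S := by
    ext x
    simp only [mem_inter, mem_sdiff]
    constructor
    · rintro ⟨⟨hx1, _⟩, hx3⟩; exact ⟨hx3, hx1⟩
    · rintro ⟨hx3, hx1⟩
      refine ⟨⟨hx1, fun hxN => ?_⟩, hx3⟩
      have hmem : x ∈ K ∩ nbhd G K := mem_inter.2 ⟨hx3, hxN⟩
      rw [hKN] at hmem
      exact notMem_empty x hmem
  have c1 : ((S \ nbhd G K) ∪ K).card + (K ∩ S).card = (S \ nbhd G K).card + K.card := by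
    rw [← e1]; exact card_union_add_card_inter _ _
  have c2 : (S \ nbhd G K).card + (S ∩ nbhd G K).card = S.card :=
    card_sdiff_add_card_inter S (nbhd G K)
  have hBsub : S ∩ nbhd G K ⊆ nbhd G K \ nbhd G (K ∩ S) := by
    intro x hx
    obtain ⟨hxS, hxN⟩ := mem_inter.1 hx
    refine mem_sdiff.2 ⟨hxN, fun hxP => ?_⟩
    obtain ⟨k, hk, hadj⟩ := mem_nbhd.1 hxP
    exact hSst k (mem_inter.1 hk).2 x hxS hadj
  have hNP : nbhd G (K ∩ S) ⊆ nbhd G K := nbhd_mono inter_subset_left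
  have c3 : (S ∩ nbhd G K).card + (nbhd G (K ∩ S)).card ≤ (nbhd G K).card := by
    have h1 : (S ∩ nbhd G K).card ≤ (nbhd G K \ nbhd G (K ∩ S)).card := card_le_card hBsub
    have h2 : (nbhd G K \ nbhd G (K ∩ S)).card + (nbhd G (K ∩ S)).card = (nbhd G K).card :=
      card_sdiff_add_card_eq_card hNP
    omega
  have c4 : ((S \ nbhd G K) ∪ K).card ≤ S.card := by
    rw [hScard]; exact card_le_alpha hS'st
  have c5 : dval G (K ∩ S) ≤ dval G K := by rw [hK]; exact dval_le_dmax G _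
  have hPd : dval G (K ∩ S) = dmax G := by
    rw [← hK]
    rw [dval, dval] at c5 ⊢
    push_cast at c1 c2 c3 c4 ⊢
    omega
  exact subset_trans (hmin _ hPd) inter_subset_right

lemma two_alpha_le (G : SimpleGraph V) :
    2 * (alpha G : ℤ) - (Fintype.card V : ℤ) ≤ dmax G := by
  classical
  obtain ⟨S, hSst, hScard⟩ := exists_maxStable G
  have hsub : nbhd G S ⊆ univ \ S := by
    intro v hv
    obtain ⟨a, ha, hadj⟩ := mem_nbhd.1 hv
    refine mem_sdiff.2 ⟨mem_univ _, fun hvS => ?_⟩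
    exact hSst a ha v hvS hadj
  have h1 : (nbhd G S).card ≤ (univ \ S).card := card_le_card hsub
  have h2 : (univ \ S).card + S.card = (univ : Finset V).card :=
    card_sdiff_add_card_eq_card (subset_univ S)
  have h3 : (univ : Finset V).card = Fintype.card V := rfl
  have h4 : dval G S ≤ dmax G := dval_le_dmax G S
  rw [dval] at h4
  rw [hScard] at h4
  push_cast at h1 h2 ⊢
  omega

lemma isol_subset_core (G : SimpleGraph V) : isol G ⊆ core G := by
  classical
  intro v hv
  rw [isol, mem_filter] at hv
  rw [core, mem_filter]
  refine ⟨mem_univ _, ?_⟩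
  rintro S ⟨hSst, hScard⟩
  by_contra hvS
  have hstab : stable G (insert v S) := by
    intro a ha b hb hadj
    rcases mem_insert.1 ha with rfl | ha
    · exact hv.2 b hadj
    · rcases mem_insert.1 hb with rfl | hb
      · exact hv.2 a hadj.symm
      · exact hSst a ha b hb hadj
  have hle := card_le_alpha hstab
  rw [card_insert_of_notMem hvS, hScard] at hle
  omega

theorem stmt6 (G : SimpleGraph V) (h1 : Fintype.card V < 2 * alpha G)
    (h2 : (isol G).card ≠ 1) :
    2 ≤ (core G).card := by
  classical
  obtain ⟨K, hK, hmin⟩ := exists_min_critical G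
  have hKcore : K ⊆ core G := by
    intro v hv
    rw [core, mem_filter]
    exact ⟨mem_univ _, fun S hS => min_critical_subset G hK hmin hS hv⟩
  have hd : 2 * (alpha G : ℤ) - (Fintype.card V : ℤ) ≤ dmax G := two_alpha_le G
  have hd1 : (1 : ℤ) ≤ dmax G := by
    have : (Fintype.card V : ℤ) < 2 * (alpha G : ℤ) := by exact_mod_cast h1
    omega
  by_cases hK2 : 2 ≤ K.card
  · exact le_trans hK2 (card_le_card hKcore)
  · have hKd : (K.card : ℤ) - ((nbhd G K).card : ℤ) = dmax G := hK
    have hnbK : ((nbhd G K).card : ℤ) ≥ 0 := Int.ofNat_nonneg _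
    have hK1 : K.card = 1 := by omega
    have hnb0 : (nbhd G K).card = 0 := by omega
    obtain ⟨v, hv⟩ := card_eq_one.1 hK1
    have hiso : isolated G v := by
      intro w hw
      have hmem : w ∈ nbhd G K := mem_nbhd.2 ⟨v, by simp [hv], hw⟩
      rw [card_eq_zero.1 hnb0] at hmem
      exact notMem_empty w hmem
    have hvisol : v ∈ isol G := by
      rw [isol, mem_filter]; exact ⟨mem_univ _, hiso⟩
    have hisol1 : 1 ≤ (isol G).card := card_pos.2 ⟨v, hvisol⟩
    have hisol2 : 2 ≤ (isol G).card := by omega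
    exact le_trans hisol2 (card_le_card (isol_subset_core G))
end

section
/- If G is a graph with α(G) > |V(G)|/2 and |core(G)| = 1, then G has exactly one isolated vertex. -/
open Finset

variable {V : Type*} [Fintype V] [DecidableEq V]

set_option linter.unusedSectionVars false

lemma stable_card_le (G : SimpleGraph V) (S : Finset V) (hS : stable G S) :
    S.card ≤ alpha G := by
  classical
  unfold alpha
  have h := Finset.le_sup (f := fun S : Finset V => if stable G S then S.card else 0)
    (Finset.mem_univ S)
  simpa [hS] using h

lemma mem_core_iff (G : SimpleGraph V) (v : V) :
    v ∈ core G ↔ ∀ S, maxStable G S → v ∈ S := by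
  classical
  simp [core]

lemma inter_union_lemma (G : SimpleGraph V) (a : ℕ) (F : Finset (Finset V)) :
    F.Nonempty →
    (∀ S ∈ F, stable G S ∧ S.card = a) →
    (∀ T, stable G T → T ⊆ F.sup id → T.card ≤ a) →
    2 * a ≤ (F.inf id).card + (F.sup id).card := by
  classical
  induction F using Finset.induction_on with
  | empty => rintro ⟨x, hx⟩; simp at hx
  | @insert S F hSF ih =>
    intro _ hmem hb
    have hSmem := hmem S (Finset.mem_insert_self S F)
    rcases F.eq_empty_or_nonempty with rfl | hFne
    · simp only [LawfulSingleton.insert_empty_eq, Finset.inf_singleton, Finset.sup_singleton, id]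
      omega
    · have hD := ih hFne (fun T hT => hmem T (Finset.mem_insert_of_mem hT))
        (fun T h1 h2 => hb T h1 (h2.trans (Finset.sup_mono (Finset.subset_insert S F))))
      set D := F.inf id with hDdef
      set U := F.sup id with hUdef
      obtain ⟨S₀, hS₀⟩ := hFne
      have hinfsub : ∀ {X : Finset V}, X ∈ F → D ⊆ X :=
        fun hX => Finset.le_iff_subset.mp (Finset.inf_le hX)
      have hDS₀ : D ⊆ S₀ := hinfsub hS₀
      have hDU : D ⊆ U := hDS₀.trans (Finset.le_iff_subset.mp (Finset.le_sup (f := id) hS₀))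
      -- stability of D ∪ (S ∩ U)
      have hTstable : stable G (D ∪ (S ∩ U)) := by
        intro x hx y hy
        rcases Finset.mem_union.mp hx with hxD | hxSU
        · rcases Finset.mem_union.mp hy with hyD | hySU
          · exact (hmem S₀ (Finset.mem_insert_of_mem hS₀)).1 x (hDS₀ hxD) y (hDS₀ hyD)
          · obtain ⟨Sy, hSy, hySy⟩ := Finset.mem_sup.mp (Finset.mem_inter.mp hySU).2
            exact (hmem Sy (Finset.mem_insert_of_mem hSy)).1 x (hinfsub hSy hxD) y hySy
        · rcases Finset.mem_union.mp hy with hyD | hySU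
          · obtain ⟨Sx, hSx, hxSx⟩ := Finset.mem_sup.mp (Finset.mem_inter.mp hxSU).2
            exact (hmem Sx (Finset.mem_insert_of_mem hSx)).1 x hxSx y (hinfsub hSx hyD)
          · exact hSmem.1 x (Finset.mem_inter.mp hxSU).1 y (Finset.mem_inter.mp hySU).1
      have hTsub : D ∪ (S ∩ U) ⊆ (insert S F).sup id := by
        rw [Finset.sup_insert]
        intro x hx
        rcases Finset.mem_union.mp hx with hxD | hxSU
        · exact Finset.mem_union_right _ (hDU hxD)
        · exact Finset.mem_union_left _ (Finset.mem_inter.mp hxSU).1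
      have hTcard := hb _ hTstable hTsub
      have c1 := Finset.card_union_add_card_inter S U
      have c2 := Finset.card_union_add_card_inter D (S ∩ U)
      have c3 : D ∩ (S ∩ U) = S ∩ D := by
        ext x
        simp only [Finset.mem_inter]
        exact ⟨fun h => ⟨h.2.1, h.1⟩, fun h => ⟨h.2, h.1, hDU h.2⟩⟩
      rw [c3] at c2
      rw [Finset.inf_insert, Finset.sup_insert]
      simp only [id, Finset.inf_eq_inter, Finset.sup_eq_union]
      rw [← hDdef, ← hUdef]
      omega


lemma isolated_mem_maxStable (G : SimpleGraph V) (u : V) (hu : isolated G u)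
    (S : Finset V) (hS : maxStable G S) : u ∈ S := by
  by_contra huS
  have hstable : stable G (insert u S) := by
    intro a ha b hb
    rcases Finset.mem_insert.mp ha with rfl | ha
    · exact hu b
    · rcases Finset.mem_insert.mp hb with rfl | hb
      · exact fun h => hu a h.symm
      · exact hS.1 a ha b hb
  have := stable_card_le G _ hstable
  rw [Finset.card_insert_of_notMem huS, hS.2] at this
  omega

/-  If α(G) > |V(G)|/2 and |core(G)| = 1, then G has exactly one isolated vertex. -/
theorem stmt7 (G : SimpleGraph V) (h1 : Fintype.card V < 2 * alpha G)
    (h2 : (core G).card = 1) :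
    (isol G).card = 1 := by
  classical
  obtain ⟨v, hv⟩ := Finset.card_eq_one.mp h2
  have hvS : ∀ S, maxStable G S → v ∈ S := by
    have hvc : v ∈ core G := hv ▸ Finset.mem_singleton_self v
    exact (mem_core_iff G v).mp hvc
  have halpha1 : 1 ≤ alpha G := by
    have : 0 < Fintype.card V := Fintype.card_pos_iff.mpr ⟨v⟩
    omega
  -- v is isolated
  have hiso_v : isolated G v := by
    by_contra hni
    obtain ⟨w, hw⟩ := not_forall.mp hni
    rw [not_not] at hw
    set F : Finset (Finset V) :=
      (Finset.univ.filter fun S => maxStable G S).image (fun S => S.erase v) with hFdef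
    have hmemF : ∀ T ∈ F, ∃ S, maxStable G S ∧ T = S.erase v := by
      intro T hT
      obtain ⟨S, hS, rfl⟩ := Finset.mem_image.mp hT
      exact ⟨S, (Finset.mem_filter.mp hS).2, rfl⟩
    have hFmem' : ∀ S, maxStable G S → S.erase v ∈ F := by
      intro S hS
      exact Finset.mem_image.mpr ⟨S, Finset.mem_filter.mpr ⟨Finset.mem_univ S, hS⟩, rfl⟩
    obtain ⟨S₀, hS₀⟩ := exists_maxStable G
    have hFne : F.Nonempty := ⟨S₀.erase v, hFmem' S₀ hS₀⟩
    have hmem : ∀ T ∈ F, stable G T ∧ T.card = alpha G - 1 := by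
      intro T hT
      obtain ⟨S, hS, rfl⟩ := hmemF T hT
      constructor
      · exact fun a ha b hb => hS.1 a (Finset.mem_of_mem_erase ha) b (Finset.mem_of_mem_erase hb)
      · rw [Finset.card_erase_of_mem (hvS S hS), hS.2]
    have hb : ∀ T, stable G T → T ⊆ F.sup id → T.card ≤ alpha G - 1 := by
      intro T hTs hTsub
      have hprop : ∀ t ∈ T, t ∈ Finset.univ ∧ t ≠ v ∧ ¬ G.Adj v t ∧ ¬ G.Adj t v := by
        intro t ht
        obtain ⟨M, hM, htM⟩ := Finset.mem_sup.mp (hTsub ht)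
        obtain ⟨S, hS, rfl⟩ := hmemF M hM
        have htS : t ∈ S := Finset.mem_of_mem_erase htM
        exact ⟨Finset.mem_univ t, Finset.ne_of_mem_erase htM,
          hS.1 v (hvS S hS) t htS, hS.1 t htS v (hvS S hS)⟩
      have hvT : v ∉ T := fun h => (hprop v h).2.1 rfl
      have hstable : stable G (insert v T) := by
        intro a ha b hb hadj
        rcases Finset.mem_insert.mp ha with ha' | ha'
        · rcases Finset.mem_insert.mp hb with hb' | hb'
          · exact G.irrefl (ha' ▸ hb' ▸ hadj)
          · exact (hprop b hb').2.2.1 (ha' ▸ hadj)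
        · rcases Finset.mem_insert.mp hb with hb' | hb'
          · exact (hprop a ha').2.2.2 (hb' ▸ hadj)
          · exact hTs a ha' b hb' hadj
      have := stable_card_le G _ hstable
      rw [Finset.card_insert_of_notMem hvT] at this
      omega
    have key := inter_union_lemma G (alpha G - 1) F hFne hmem hb
    have hinf : F.inf id = ∅ := by
      rw [Finset.eq_empty_iff_forall_notMem]
      intro u hu
      have husub : ∀ M ∈ F, u ∈ M :=
        fun M hM => Finset.le_iff_subset.mp (Finset.inf_le hM) hu
      by_cases huv : u = v
      · subst huv
        exact Finset.notMem_erase u S₀ (husub _ (hFmem' S₀ hS₀))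
      · have hucore : u ∉ core G := by
          rw [hv]
          simp [huv]
        rw [mem_core_iff] at hucore
        push_neg at hucore
        obtain ⟨S, hSmax, huS⟩ := hucore
        exact huS (Finset.mem_of_mem_erase (husub _ (hFmem' S hSmax)))
    have hsub : F.sup id ⊆ Finset.univ \ {v, w} := by
      intro x hx
      obtain ⟨M, hM, hxM⟩ := Finset.mem_sup.mp hx
      obtain ⟨S, hS, rfl⟩ := hmemF M hM
      have hxS : x ∈ S := Finset.mem_of_mem_erase hxM
      rw [Finset.mem_sdiff]
      refine ⟨Finset.mem_univ x, ?_⟩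
      simp only [Finset.mem_insert, Finset.mem_singleton]
      rintro (rfl | rfl)
      · exact Finset.notMem_erase x S hxM
      · exact hS.1 v (hvS S hS) x hxS hw
    have hvw : v ≠ w := hw.ne
    have hcard2 : ({v, w} : Finset V).card = 2 := Finset.card_pair hvw
    have hcardsd : (Finset.univ \ ({v, w} : Finset V)).card = Fintype.card V - 2 := by
      rw [Finset.card_sdiff_of_subset (Finset.subset_univ _), hcard2, Finset.card_univ]
    have hle : (F.sup id).card ≤ Fintype.card V - 2 := by
      rw [← hcardsd]; exact Finset.card_le_card hsub
    have h2n : 2 ≤ Fintype.card V := by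
      calc 2 = ({v, w} : Finset V).card := hcard2.symm
        _ ≤ Fintype.card V := Finset.card_le_univ _
    rw [hinf] at key
    simp only [Finset.card_empty] at key
    omega
  -- conclude
  have hsub2 : isol G ⊆ {v} := by
    intro u hu
    have hu' : isolated G u := (Finset.mem_filter.mp hu).2
    have : u ∈ core G := (mem_core_iff G u).mpr (fun S hS => isolated_mem_maxStable G u hu' S hS)
    rwa [hv] at this
  have hvmem : v ∈ isol G := Finset.mem_filter.mpr ⟨Finset.mem_univ v, hiso_v⟩
  have : isol G = {v} :=
    Finset.Subset.antisymm hsub2 (Finset.singleton_subset_iff.mpr hvmem)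
  rw [this, Finset.card_singleton]
end

section
/- Let G be a graph and H = G[V(G) - N[core(G)]]. Then α(H) = α(G) - |core(G)|. -/
open Finset

variable {V : Type*} [Fintype V] [DecidableEq V]

lemma stable_le_alpha (G : SimpleGraph V) {S : Finset V} (h : stable G S) :
    S.card ≤ alpha G := by
  classical
  have := Finset.le_sup (f := fun S : Finset V => if stable G S then S.card else 0)
    (Finset.mem_univ S)
  simpa [h, alpha] using this

lemma core_subset {G : SimpleGraph V} {S : Finset V} (h : maxStable G S) :
    core G ⊆ S := by
  intro v hv
  simp only [core, Finset.mem_filter] at hv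
  exact hv.2 S h

theorem stmt11 (G : SimpleGraph V) :
    alpha (SimpleGraph.comap
        (Subtype.val : {x : V // x ∉ core G ∪ nbhd G (core G)} → V) G)
      = alpha G - (core G).card := by
  classical
  set H := SimpleGraph.comap
      (Subtype.val : {x : V // x ∉ core G ∪ nbhd G (core G)} → V) G with hH
  obtain ⟨S, hSst, hScard⟩ := exists_maxStable G
  have hcore : core G ⊆ S := core_subset ⟨hSst, hScard⟩
  have hcorestable : stable G (core G) := fun a ha b hb =>
    hSst a (hcore ha) b (hcore hb)
  -- upper bound: alpha H + core.card ≤ alpha G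
  have hub : alpha H + (core G).card ≤ alpha G := by
    obtain ⟨T, hTst, hTcard⟩ := exists_maxStable H
    have himg : ∀ x ∈ T.image Subtype.val, x ∉ core G ∪ nbhd G (core G) := by
      intro x hx
      obtain ⟨y, hy, rfl⟩ := Finset.mem_image.mp hx
      exact y.2
    have hdisj : Disjoint (T.image Subtype.val) (core G) := by
      rw [Finset.disjoint_left]
      intro x hx hxc
      exact himg x hx (Finset.mem_union_left _ hxc)
    have hstU : stable G (T.image Subtype.val ∪ core G) := by
      intro a ha b hb hab
      rw [Finset.mem_union] at ha hb
      have key : ∀ x y : V, x ∈ T.image Subtype.val → y ∈ core G → ¬ G.Adj x y := by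
        intro x y hx hy hxy
        apply himg x hx
        apply Finset.mem_union_right
        simp only [nbhd, Finset.mem_filter, Finset.mem_univ, true_and]
        exact ⟨y, hy, hxy.symm⟩
      rcases ha with ha | ha <;> rcases hb with hb | hb
      · obtain ⟨a', ha', rfl⟩ := Finset.mem_image.mp ha
        obtain ⟨b', hb', rfl⟩ := Finset.mem_image.mp hb
        exact hTst a' ha' b' hb' hab
      · exact key a b ha hb hab
      · exact key b a hb ha hab.symm
      · exact hcorestable a ha b hb hab
    have := stable_le_alpha G hstU
    rwa [Finset.card_union_of_disjoint hdisj,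
      Finset.card_image_of_injective _ Subtype.val_injective, hTcard] at this
  -- lower bound
  have hlb : alpha G - (core G).card ≤ alpha H := by
    have hmem : ∀ v ∈ S \ core G, v ∉ core G ∪ nbhd G (core G) := by
      intro v hv
      rw [Finset.mem_sdiff] at hv
      rw [Finset.mem_union]
      rintro (h | h)
      · exact hv.2 h
      · simp only [nbhd, Finset.mem_filter, Finset.mem_univ, true_and] at h
        obtain ⟨a, ha, hadj⟩ := h
        exact hSst a (hcore ha) v hv.1 hadj
    set T : Finset {x : V // x ∉ core G ∪ nbhd G (core G)} :=
      (S \ core G).subtype (fun v => v ∉ core G ∪ nbhd G (core G)) with hT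
    have hTst : stable H T := by
      intro a ha b hb hab
      rw [hT, Finset.mem_subtype] at ha hb
      exact hSst a (Finset.mem_sdiff.mp ha).1 b (Finset.mem_sdiff.mp hb).1 hab
    have hTcard : T.card = alpha G - (core G).card := by
      rw [hT, Finset.card_subtype]
      rw [Finset.filter_true_of_mem (fun v hv => hmem v hv)]
      rw [Finset.card_sdiff_of_subset hcore, hScard]
    calc alpha G - (core G).card = T.card := hTcard.symm
      _ ≤ alpha H := stable_le_alpha H hTst
  omega
end
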